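/- Let n, p, r ∈ ℕ. Let T : ℝ → Matrix (Fin n) (Fin n) ℝ be infinitely differentiable (C^∞) with T(t) invertible for every t, and let F : ℝ → Matrix (Fin n) (Fin n) ℝ and H : ℝ → Matrix (Fin p) (Fin n) ℝ be infinitely differentiable. Define F*(t) = T'(t)·T(t)⁻¹ + T(t)·F(t)·T(t)⁻¹ and H*(t) = H(t)·T(t)⁻¹, and define the observability block sequences O₀(t) = H(t), O_{k+1}(t) = O_k(t)·F(t) + (d/dt)O_k(t), and O*₀(t) = H*(t), O*_{k+1}(t) = O*_k(t)·F*(t) + (d/dt)O*_k(t). Let N : ℝ → Matrix (Fin n) (Fin r) ℝ be such that O_k(t)·N(t) = 0 for every k ∈ ℕ and t ∈ ℝ. Then: (a) O*_k(t)·(T(t)·N(t)) = 0 for every k ∈ ℕ and t ∈ ℝ; and (b) for every t, if the columns of N(t) are linearly independent in ℝⁿ, then the columns of T(t)·N(t) are linearly independent in ℝⁿ. -/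

import Mathlib

open Matrix

/-- Entrywise derivative of a matrix-valued function of time. -/
noncomputable def matDeriv {p n : ℕ} (A : ℝ → Matrix (Fin p) (Fin n) ℝ) (t : ℝ) :
    Matrix (Fin p) (Fin n) ℝ :=
  Matrix.of fun i j => deriv (fun s => A s i j) t

/-- The local observability block sequence of the time-varying linear system
`ε̇ = F(t) ε`, `z = H(t) ε`:  `O₀ = H`, `O_{k+1} = O_k F + Ȯ_k`. -/
noncomputable def obsSeq {n p : ℕ} (F : ℝ → Matrix (Fin n) (Fin n) ℝ)
    (H : ℝ → Matrix (Fin p) (Fin n) ℝ) : ℕ → ℝ → Matrix (Fin p) (Fin n) ℝ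
  | 0 => H
  | k + 1 => fun t => obsSeq F H k t * F t + matDeriv (obsSeq F H k) t

local notation "∞'" => ((⊤ : ℕ∞) : WithTop ℕ∞)

def MSmooth {p n : ℕ} (A : ℝ → Matrix (Fin p) (Fin n) ℝ) : Prop :=
  ∀ i j, ContDiff ℝ ∞' fun t => A t i j

lemma MSmooth.matDeriv' {p n : ℕ} {A : ℝ → Matrix (Fin p) (Fin n) ℝ} (h : MSmooth A) :
    MSmooth (matDeriv A) := fun i j => (contDiff_infty_iff_deriv.mp (h i j)).2

lemma MSmooth.mul {p n q : ℕ} {A : ℝ → Matrix (Fin p) (Fin n) ℝ}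
    {B : ℝ → Matrix (Fin n) (Fin q) ℝ} (hA : MSmooth A) (hB : MSmooth B) :
    MSmooth (fun t => A t * B t) := by
  intro i j
  simp only [Matrix.mul_apply]
  exact ContDiff.sum fun k _ => (hA i k).mul (hB k j)

lemma MSmooth.add {p n : ℕ} {A B : ℝ → Matrix (Fin p) (Fin n) ℝ}
    (hA : MSmooth A) (hB : MSmooth B) : MSmooth (fun t => A t + B t) := by
  intro i j
  simpa using (hA i j).add (hB i j)

lemma matDeriv_mul {p n q : ℕ} {A : ℝ → Matrix (Fin p) (Fin n) ℝ}
    {B : ℝ → Matrix (Fin n) (Fin q) ℝ} (hA : MSmooth A) (hB : MSmooth B) (t : ℝ) :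
    matDeriv (fun s => A s * B s) t = matDeriv A t * B t + A t * matDeriv B t := by
  ext i j
  have hone : (1 : WithTop ℕ∞) ≤ ∞' := by exact_mod_cast le_top
  have h : HasDerivAt (fun s => ∑ k, A s i k * B s k j)
      (∑ k, (deriv (fun s => A s i k) t * B t k j + A t i k * deriv (fun s => B s k j) t)) t := by
    refine HasDerivAt.fun_sum fun k _ => HasDerivAt.mul ?_ ?_
    · exact ((hA i k).differentiable (by simp) t).hasDerivAt
    · exact ((hB k j).differentiable (by simp) t).hasDerivAt
  have key : (fun s => (A s * B s) i j) = fun s => ∑ k, A s i k * B s k j :=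
    funext fun s => Matrix.mul_apply
  simp only [matDeriv, Matrix.of_apply, Matrix.add_apply]
  rw [key, h.deriv, Finset.sum_add_distrib, Matrix.mul_apply, Matrix.mul_apply]
  rfl

lemma msmooth_det {m : ℕ} {A : ℝ → Matrix (Fin m) (Fin m) ℝ} (h : MSmooth A) :
    ContDiff ℝ ∞' fun t => (A t).det := by
  simp only [Matrix.det_apply']
  exact ContDiff.sum fun σ _ => ContDiff.mul contDiff_const (contDiff_prod fun i _ => h (σ i) i)

lemma msmooth_inv {m : ℕ} {A : ℝ → Matrix (Fin m) (Fin m) ℝ} (h : MSmooth A)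
    (hu : ∀ t, IsUnit (A t)) : MSmooth (fun t => (A t)⁻¹) := by
  intro i j
  have hdet : ∀ t, (A t).det ≠ 0 := fun t =>
    ((Matrix.isUnit_iff_isUnit_det _).mp (hu t)).ne_zero
  have h1 : ∀ t, (A t)⁻¹ i j = ((A t).det)⁻¹ * (A t).adjugate i j := by
    intro t
    rw [Matrix.inv_def, Ring.inverse_eq_inv']
    simp [Matrix.smul_apply, smul_eq_mul]
  simp only [h1]
  refine ContDiff.mul ((msmooth_det h).inv hdet) ?_
  have h2 : ∀ t, (A t).adjugate i j = ((A t).updateRow j (Pi.single i 1)).det := fun t =>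
    Matrix.adjugate_apply _ _ _
  simp only [h2]
  refine msmooth_det ?_
  intro a b
  by_cases hab : a = j
  · subst hab; simp only [Matrix.updateRow_self]; exact contDiff_const
  · simp only [Matrix.updateRow_ne hab]; exact h a b

lemma msmooth_obsSeq {n p : ℕ} {F : ℝ → Matrix (Fin n) (Fin n) ℝ}
    {H : ℝ → Matrix (Fin p) (Fin n) ℝ} (hF : MSmooth F) (hH : MSmooth H) :
    ∀ k, MSmooth (obsSeq F H k)
  | 0 => hH
  | k + 1 => ((msmooth_obsSeq hF hH k).mul hF).add (msmooth_obsSeq hF hH k).matDeriv'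

lemma matDeriv_one {n : ℕ} (t : ℝ) :
    matDeriv (fun _ : ℝ => (1 : Matrix (Fin n) (Fin n) ℝ)) t = 0 := by
  ext i j
  simp [matDeriv]

lemma matDeriv_inv {n : ℕ} {T : ℝ → Matrix (Fin n) (Fin n) ℝ} (hT : MSmooth T)
    (hu : ∀ t, IsUnit (T t)) (t : ℝ) :
    matDeriv (fun s => (T s)⁻¹) t = -((T t)⁻¹ * matDeriv T t * (T t)⁻¹) := by
  have hinv : MSmooth fun s => (T s)⁻¹ := msmooth_inv hT hu
  have hdet : ∀ s, IsUnit (T s).det := fun s => (Matrix.isUnit_iff_isUnit_det _).mp (hu s)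
  have h1 : (fun s => (T s)⁻¹ * T s) = fun _ => (1 : Matrix (Fin n) (Fin n) ℝ) :=
    funext fun s => Matrix.nonsing_inv_mul _ (hdet s)
  have h2 := matDeriv_mul hinv hT t
  rw [h1, matDeriv_one] at h2
  have h3 : matDeriv (fun s => (T s)⁻¹) t * T t = -((T t)⁻¹ * matDeriv T t) := by
    have := congrArg (fun M => M - (T t)⁻¹ * matDeriv T t) h2.symm
    simpa [add_sub_cancel_right] using eq_neg_of_add_eq_zero_left h2.symm
  calc matDeriv (fun s => (T s)⁻¹) t
      = matDeriv (fun s => (T s)⁻¹) t * (T t * (T t)⁻¹) := by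
        rw [Matrix.mul_nonsing_inv _ (hdet t), Matrix.mul_one]
    _ = matDeriv (fun s => (T s)⁻¹) t * T t * (T t)⁻¹ := by rw [Matrix.mul_assoc]
    _ = -((T t)⁻¹ * matDeriv T t * (T t)⁻¹) := by rw [h3, Matrix.neg_mul]

lemma obsSeq_star {n p : ℕ} {T F : ℝ → Matrix (Fin n) (Fin n) ℝ}
    {H : ℝ → Matrix (Fin p) (Fin n) ℝ} (hT : MSmooth T) (hF : MSmooth F)
    (hH : MSmooth H) (hu : ∀ t, IsUnit (T t)) (k : ℕ) (t : ℝ) :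
    obsSeq (fun s => matDeriv T s * (T s)⁻¹ + T s * F s * (T s)⁻¹)
      (fun s => H s * (T s)⁻¹) k t = obsSeq F H k t * (T t)⁻¹ := by
  induction k generalizing t with
  | zero => rfl
  | succ k ih =>
    have hdet : ∀ s, IsUnit (T s).det := fun s => (Matrix.isUnit_iff_isUnit_det _).mp (hu s)
    have hinv : MSmooth fun s => (T s)⁻¹ := msmooth_inv hT hu
    have hO : MSmooth (obsSeq F H k) := msmooth_obsSeq hF hH k
    have hfun : obsSeq (fun s => matDeriv T s * (T s)⁻¹ + T s * F s * (T s)⁻¹)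
        (fun s => H s * (T s)⁻¹) k = fun s => obsSeq F H k s * (T s)⁻¹ := funext fun s => ih s
    show obsSeq _ _ k t * (matDeriv T t * (T t)⁻¹ + T t * F t * (T t)⁻¹) +
        matDeriv (obsSeq _ _ k) t = (obsSeq F H k t * F t + matDeriv (obsSeq F H k) t) * (T t)⁻¹
    rw [hfun, matDeriv_mul hO hinv t, matDeriv_inv hT hu t]
    beta_reduce
    have hti : (T t)⁻¹ * T t = 1 := Matrix.nonsing_inv_mul _ (hdet t)
    simp only [Matrix.mul_add, Matrix.add_mul, Matrix.mul_neg, Matrix.mul_assoc]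
    rw [← Matrix.mul_assoc ((T t)⁻¹) (T t) (F t * (T t)⁻¹), hti, Matrix.one_mul]
    abel


/-- **Corollary 2 of the paper, second part**: if `N` is a basis matrix of the unobservable
subspace of one equivariant filter (`O_k N = 0` for all `k`, `t`), then `N* = T N` is
annihilated by all observability blocks of the transformed filter, and at each time the
columns of `T N` are linearly independent whenever those of `N` are. -/
theorem unobservable_subspace_transformation (n p r : ℕ)
    (T : ℝ → Matrix (Fin n) (Fin n) ℝ)
    (F : ℝ → Matrix (Fin n) (Fin n) ℝ)
    (H : ℝ → Matrix (Fin p) (Fin n) ℝ)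
    (hT : ∀ i j, ContDiff ℝ (⊤ : ℕ∞) fun t => T t i j)
    (hF : ∀ i j, ContDiff ℝ (⊤ : ℕ∞) fun t => F t i j)
    (hH : ∀ i j, ContDiff ℝ (⊤ : ℕ∞) fun t => H t i j)
    (hTinv : ∀ t, IsUnit (T t))
    (N : ℝ → Matrix (Fin n) (Fin r) ℝ)
    (hN : ∀ (k : ℕ) (t : ℝ), obsSeq F H k t * N t = 0) :
    let Fstar := fun t => matDeriv T t * (T t)⁻¹ + T t * F t * (T t)⁻¹
    let Hstar := fun t => H t * (T t)⁻¹
    (∀ (k : ℕ) (t : ℝ), obsSeq Fstar Hstar k t * (T t * N t) = 0) ∧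
    (∀ t : ℝ, LinearIndependent ℝ (fun j i => N t i j) →
      LinearIndependent ℝ (fun j i => (T t * N t) i j)) := by
  intro Fstar Hstar
  have hT' : MSmooth T := fun i j => (hT i j).of_le (by simp)
  have hF' : MSmooth F := fun i j => (hF i j).of_le (by simp)
  have hH' : MSmooth H := fun i j => (hH i j).of_le (by simp)
  constructor
  · intro k t
    rw [obsSeq_star hT' hF' hH' hTinv k t, Matrix.mul_assoc, ← Matrix.mul_assoc ((T t)⁻¹),
      Matrix.nonsing_inv_mul _ ((Matrix.isUnit_iff_isUnit_det _).mp (hTinv t)),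
      Matrix.one_mul, hN k t]
  · intro t hli
    have hinj : Function.Injective (T t).mulVecLin :=
      Matrix.mulVec_injective_iff_isUnit.mpr (hTinv t)
    have heq : (fun j i => (T t * N t) i j) = (T t).mulVecLin ∘ fun j i => N t i j := by
      funext j
      ext i
      simp [Matrix.mul_apply, Matrix.mulVec, dotProduct]
    rw [heq]
    exact hli.map' (T t).mulVecLin (LinearMap.ker_eq_bot.mpr hinj)
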